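/- arXiv:1812.10351 — 2 statements merged into one kernel-verified Lean document; each statement's English description precedes it below -/
import Mathlib

section
/- For every positive integer n, the sum over k from 0 to n-1 of (11k^2+9k+2)·(-1)^k·β_k is divisible by 2n^2, where β_k = Σ_{j=0}^{k} C(k,j)^2·C(k+j,j). -/
def apheryBeta (k : ℕ) : ℕ := ∑ j ∈ Finset.range (k + 1), (Nat.choose k j) ^ 2 * Nat.choose (k + j) j

/-!
Apéry's recurrence `(m+2)² β_{m+2} = (11(m+1)² + 11(m+1) + 3) β_{m+1} + (m+1)² β_m`, proved by
creative telescoping, makes the weighted sum telescope: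
`∑_{k ≤ n} (11k² + 9k + 2)(-1)^k β_k = (-1)^n (n+1)² (β_{n+1} - β_n)`.
Every `β_k` is odd, because for `j > 0` the summand `C(k,j)² C(k+j,j)` contains the factor
`C(k+j,j) C(k,j) = C(k+j,2j) C(2j,j)` and central binomial coefficients are even.
So `β_{n+1} - β_n` is even.
-/
open Finset

section Choose

variable {R : Type*} [Ring R]

theorem Nat.cast_choose_succ_right_mul (n k : ℕ) :
    (n.choose (k + 1) : R) * (k + 1) = n.choose k * ((n : R) - k) := by
  rcases le_or_gt k n with hkn | hnk
  · have h := congrArg (Nat.cast : ℕ → R) (n.choose_succ_right_eq k)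
    push_cast [hkn] at h
    exact h
  · simp [Nat.choose_eq_zero_of_lt hnk, Nat.choose_eq_zero_of_lt (hnk.trans k.lt_succ_self)]

theorem Nat.cast_choose_mul_succ (n k : ℕ) :
    (n.choose k : R) * (n + 1) = (n + 1).choose k * ((n : R) + 1 - k) := by
  rcases le_or_gt k (n + 1) with hkn | hnk
  · have h := congrArg (Nat.cast : ℕ → R) (n.choose_mul_succ_eq k)
    push_cast [hkn] at h
    exact h
  · simp [Nat.choose_eq_zero_of_lt hnk, Nat.choose_eq_zero_of_lt ((n.lt_succ_self).trans hnk)]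

end Choose

theorem two_dvd_add_choose_mul_choose (k : ℕ) {j : ℕ} (hj : 0 < j) :
    2 ∣ (k + j).choose j * k.choose j := by
  rcases le_or_gt j k with hjk | hkj
  · have h := Nat.choose_mul (n := k + j) (k := 2 * j) (s := j) (by omega)
    rw [show k + j - j = k by omega, show 2 * j - j = j by omega] at h
    rw [← h]
    exact Dvd.dvd.mul_left (Nat.two_dvd_centralBinom_of_one_le hj) _
  · simp [Nat.choose_eq_zero_of_lt hkj]

theorem odd_apheryBeta (k : ℕ) : Odd (apheryBeta k) := by
  rw [apheryBeta, sum_range_succ']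
  refine Even.add_odd (even_sum _ fun j _ => ?_) (by simp)
  have h := two_dvd_add_choose_mul_choose k j.succ_pos
  exact even_iff_two_dvd.2 (h.trans (Dvd.intro (k.choose (j + 1)) (by ring)))

def aperyTerm (n j : ℕ) : ℚ := (n.choose j : ℚ) ^ 2 * (n + j).choose j

theorem aperyTerm_succ_left (n j : ℕ) :
    aperyTerm (n + 1) j * ((n : ℚ) + 1 - j) ^ 2 = aperyTerm n j * ((n + 1) * (n + j + 1)) := by
  have h₁ := Nat.cast_choose_mul_succ (R := ℚ) n j
  have h₂ := Nat.cast_choose_mul_succ (R := ℚ) (n + j) j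
  rw [show n + j + 1 = n + 1 + j by omega, Nat.cast_add] at h₂
  unfold aperyTerm
  apply mul_right_cancel₀ (show (n : ℚ) + 1 ≠ 0 by positivity)
  linear_combination -((n + 1).choose j : ℚ) ^ 2 * ((n : ℚ) + 1 - j) ^ 2 * h₂
    - (n + j).choose j * ((n : ℚ) + j + 1)
      * ((n + 1).choose j * ((n : ℚ) + 1 - j) + n.choose j * (n + 1)) * h₁

theorem aperyTerm_succ_right (n j : ℕ) :
    aperyTerm n (j + 1) * ((j : ℚ) + 1) ^ 3
      = aperyTerm n j * (((n : ℚ) - j) ^ 2 * (n + j + 1)) := by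
  have h₁ := Nat.cast_choose_succ_right_mul (R := ℚ) n j
  have h₂ := congrArg (Nat.cast : ℕ → ℚ) (Nat.add_one_mul_choose_eq (n + j) j)
  push_cast at h₂
  unfold aperyTerm
  rw [← add_assoc]
  linear_combination -((n.choose (j + 1) : ℚ) * (j + 1)) ^ 2 * h₂
    + (n + j).choose j * ((n : ℚ) + j + 1)
      * (n.choose (j + 1) * ((j : ℚ) + 1) + n.choose j * (n - j)) * h₁

def aperyRecTerm (m j : ℕ) : ℚ :=
  ((m : ℚ) + 2) ^ 2 * aperyTerm (m + 2) j
    - (11 * ((m : ℚ) + 1) ^ 2 + 11 * ((m : ℚ) + 1) + 3) * aperyTerm (m + 1) j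
    - ((m : ℚ) + 1) ^ 2 * aperyTerm m j

-- Certificate of Apéry's recurrence, as produced by Zeilberger's algorithm.
def aperyCert (m j : ℕ) : ℚ :=
  ((j : ℚ) ^ 2 + 6 * m * j + 9 * j - 11 * m ^ 2 - 31 * m - 22) * aperyTerm (m + 1) j

theorem aperyRecTerm_zero (m : ℕ) : aperyRecTerm m 0 = aperyCert m 0 := by
  simp only [aperyRecTerm, aperyCert, aperyTerm, Nat.choose_zero_right]
  push_cast
  ring

theorem aperyRecTerm_succ (m j : ℕ) :
    aperyRecTerm m (j + 1) = aperyCert m (j + 1) - aperyCert m j := by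
  have R₁ := aperyTerm_succ_right (m + 2) j
  have R₂ := aperyTerm_succ_left (m + 1) j
  have R₃ := aperyTerm_succ_right (m + 1) j
  have R₄ := aperyTerm_succ_right m j
  have R₅ := aperyTerm_succ_left m j
  unfold aperyRecTerm aperyCert
  push_cast at R₁ R₂ R₃ ⊢
  -- the ratio relations express every term as `aperyTerm (m + 1) j` times a rational function
  -- whose denominator divides `(j + 1)³ (m + 1)`
  apply mul_left_cancel₀ (show ((j : ℚ) + 1) ^ 3 * ((m : ℚ) + 1) ≠ 0 by positivity)
  linear_combination ((m : ℚ) + 2) ^ 2 * (m + 1) * R₁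
    + ((m : ℚ) + 2) ^ 2 * (m + 1) * (m + j + 3) * R₂
    - (11 * ((m : ℚ) + 1) ^ 2 + 11 * ((m : ℚ) + 1) + 3
        + ((j + 1 : ℚ) ^ 2 + 6 * m * (j + 1) + 9 * (j + 1) - 11 * m ^ 2 - 31 * m - 22))
      * (m + 1) * R₃
    - ((m : ℚ) + 1) ^ 3 * R₄ + ((m : ℚ) + 1) ^ 2 * ((m : ℚ) - j) ^ 2 * R₅

theorem sum_range_aperyRecTerm (m N : ℕ) :
    ∑ j ∈ range (N + 1), aperyRecTerm m j = aperyCert m N := by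
  induction N with
  | zero => simp [aperyRecTerm_zero]
  | succ N ih => rw [sum_range_succ, ih, aperyRecTerm_succ]; ring

theorem cast_apheryBeta_eq_sum {k N : ℕ} (h : k < N) :
    (apheryBeta k : ℚ) = ∑ j ∈ range N, aperyTerm k j := by
  rw [apheryBeta]
  push_cast
  refine sum_subset (range_subset_range.2 h) fun j _ hj => ?_
  simp [Nat.choose_eq_zero_of_lt (show k < j by simp at hj; omega)]

theorem apheryBeta_recurrence (m : ℕ) :
    ((m : ℤ) + 2) ^ 2 * apheryBeta (m + 2)
      = (11 * ((m : ℤ) + 1) ^ 2 + 11 * ((m : ℤ) + 1) + 3) * apheryBeta (m + 1)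
        + ((m : ℤ) + 1) ^ 2 * apheryBeta m := by
  have h := sum_range_aperyRecTerm m (m + 2)
  simp only [aperyRecTerm, sum_sub_distrib, ← mul_sum] at h
  rw [aperyCert, aperyTerm, Nat.choose_eq_zero_of_lt (by omega : m + 1 < m + 2),
    ← cast_apheryBeta_eq_sum (by omega), ← cast_apheryBeta_eq_sum (by omega),
    ← cast_apheryBeta_eq_sum (by omega)] at h
  qify
  linear_combination h

theorem sum_range_succ_weighted_apheryBeta (n : ℕ) :
    ∑ k ∈ range (n + 1), (11 * (k : ℤ) ^ 2 + 9 * k + 2) * (-1) ^ k * (apheryBeta k : ℤ)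
      = (-1) ^ n * ((n : ℤ) + 1) ^ 2 * (apheryBeta (n + 1) - apheryBeta n) := by
  induction n with
  | zero => simp [apheryBeta, sum_range_succ]
  | succ n ih =>
    rw [sum_range_succ, ih]
    push_cast
    linear_combination (-1 : ℤ) ^ n * apheryBeta_recurrence n

theorem stmt1_general (n : ℕ) :
    (2 * (n : ℤ) ^ 2) ∣
      ∑ k ∈ Finset.range n,
        (11 * (k : ℤ) ^ 2 + 9 * k + 2) * (-1) ^ k * (apheryBeta k : ℤ) := by
  rcases n with _ | n
  · simp
  rw [sum_range_succ_weighted_apheryBeta]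
  have hdiff : (2 : ℤ) ∣ apheryBeta (n + 1) - apheryBeta n :=
    (Odd.sub_odd (odd_apheryBeta _).natCast (odd_apheryBeta _).natCast).two_dvd
  push_cast
  rw [mul_comm 2, mul_assoc]
  exact (mul_dvd_mul_left _ hdiff).mul_left _

theorem stmt1 (n : ℕ) (hn : 0 < n) :
    (2 * (n : ℤ) ^ 2) ∣
      ∑ k ∈ Finset.range n,
        (11 * (k : ℤ) ^ 2 + 9 * k + 2) * (-1) ^ k * (apheryBeta k : ℤ) :=
  stmt1_general n
end

section
/- For every positive integer n, Σ_{k=1}^{n} C(n,k)·(-1)^{k-1}·H_{k,2} = H_n/n, where H_{k,2} = Σ_{j=1}^{k} 1/j^2 and H_n = Σ_{j=1}^{n} 1/j (an identity of rational numbers). -/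
/-!
Pascal's rule shows that an alternating binomial sum of order `n + 1` of a sequence `g` is `g 0`
plus the alternating binomial sum of order `n` of its differences `g (i + 1) - g i`. For
`g = H_{·,2}` the differences are `1 / (i + 1) ^ 2`, and `C(n-1, i) / (i + 1) = C(n, i + 1) / n`
turns the result into `(1 / n) ∑ₖ C(n, k) (-1)^(k-1) / k`, the classical binomial expression of
`H_n` (proved by induction on `n` with Pascal's rule again).
-/

def harmonic1 (n : ℕ) : ℚ := ∑ j ∈ Finset.Icc 1 n, (1 : ℚ) / j

def harmonic2 (n : ℕ) : ℚ := ∑ j ∈ Finset.Icc 1 n, (1 : ℚ) / (j : ℚ) ^ 2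

open Finset

theorem Finset.sum_Icc_one_eq_sum_range {M : Type*} [AddCommMonoid M] (f : ℕ → M) (n : ℕ) :
    ∑ k ∈ Icc 1 n, f k = ∑ i ∈ range n, f (i + 1) := by
  rw [← Ico_add_one_right_eq_Icc, sum_Ico_eq_sum_range, add_tsub_cancel_right]
  simp only [add_comm]

theorem harmonic1_eq_harmonic : harmonic1 = harmonic := by
  ext n
  simp [harmonic1, harmonic, sum_Icc_one_eq_sum_range]

theorem harmonic2_succ (n : ℕ) : harmonic2 (n + 1) = harmonic2 n + 1 / ((n + 1 : ℕ) : ℚ) ^ 2 := by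
  rw [harmonic2, harmonic2, sum_Icc_succ_top (Nat.le_add_left 1 n)]

section AlternatingBinomialSums

variable {R K : Type*} [CommRing R] [Field K] [CharZero K]

theorem sum_range_choose_succ_succ_mul_neg_one_pow (g : ℕ → R) (n : ℕ) :
    ∑ i ∈ range (n + 1), ((n + 1).choose (i + 1) : R) * (-1) ^ i * g (i + 1) =
      g 0 + ∑ i ∈ range (n + 1), (n.choose i : R) * (-1) ^ i * (g (i + 1) - g i) := by
  have pascal := sum_choose_succ_mul (fun i _ => (-1 : R) ^ i * g i) n
  simp only [sum_range_succ' _ (n + 1), Nat.choose_zero_right, Nat.cast_one, pow_zero, one_mul,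
    pow_succ, mul_one, neg_mul, mul_neg, sum_neg_distrib, ← mul_assoc] at pascal
  simp only [mul_sub, sum_sub_distrib]
  linear_combination -pascal

theorem sum_range_choose_succ_succ_mul_neg_one_pow_eq_one (n : ℕ) :
    ∑ i ∈ range (n + 1), ((n + 1).choose (i + 1) : R) * (-1) ^ i = 1 := by
  simpa using sum_range_choose_succ_succ_mul_neg_one_pow (fun _ => (1 : R)) n

theorem Nat.cast_choose_div_succ (n k : ℕ) :
    (n.choose k : K) / (k + 1) = ((n + 1).choose (k + 1) : K) / (n + 1) := by
  rw [div_eq_div_iff (Nat.cast_add_one_ne_zero k) (Nat.cast_add_one_ne_zero n), mul_comm]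
  exact_mod_cast Nat.add_one_mul_choose_eq n k

theorem sum_range_choose_mul_neg_one_pow_div_succ (n : ℕ) :
    ∑ i ∈ range (n + 1), (n.choose i : K) * (-1) ^ i / (i + 1) = 1 / (n + 1) := by
  calc ∑ i ∈ range (n + 1), (n.choose i : K) * (-1) ^ i / (i + 1)
      = (∑ i ∈ range (n + 1), ((n + 1).choose (i + 1) : K) * (-1) ^ i) / (n + 1) := by
        rw [sum_div]
        refine sum_congr rfl fun i _ => ?_
        rw [mul_div_right_comm, Nat.cast_choose_div_succ, div_mul_eq_mul_div]
    _ = 1 / (n + 1) := by rw [sum_range_choose_succ_succ_mul_neg_one_pow_eq_one]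

end AlternatingBinomialSums

theorem harmonic_eq_sum_choose (n : ℕ) :
    harmonic n = ∑ i ∈ range n, (n.choose (i + 1) : ℚ) * (-1) ^ i / (i + 1) := by
  induction n with
  | zero => simp
  | succ n ih =>
    calc harmonic (n + 1)
        = harmonic n + ∑ i ∈ range (n + 1), (n.choose i : ℚ) * (-1) ^ i / (i + 1) := by
          rw [harmonic_succ, sum_range_choose_mul_neg_one_pow_div_succ]
          push_cast
          ring
      _ = ∑ i ∈ range (n + 1), ((n.choose (i + 1) : ℚ) + n.choose i) * (-1) ^ i / (i + 1) := by
          simp only [ih, add_mul, add_div, sum_add_distrib, sum_range_succ _ n, Nat.choose_succ_self,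
            Nat.cast_zero, zero_mul, zero_div]
          ring
      _ = ∑ i ∈ range (n + 1), ((n + 1).choose (i + 1) : ℚ) * (-1) ^ i / (i + 1) := by
          simp only [Nat.choose_succ_succ', Nat.cast_add, add_comm]

theorem stmt9 (n : ℕ) (hn : 0 < n) :
    ∑ k ∈ Finset.Icc 1 n, (n.choose k : ℚ) * (-1) ^ (k - 1) * harmonic2 k =
      harmonic1 n / n := by
  obtain ⟨m, rfl⟩ := Nat.exists_eq_add_one_of_ne_zero hn.ne'
  calc ∑ k ∈ Icc 1 (m + 1), ((m + 1).choose k : ℚ) * (-1) ^ (k - 1) * harmonic2 k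
      = ∑ i ∈ range (m + 1), ((m + 1).choose (i + 1) : ℚ) * (-1) ^ i * harmonic2 (i + 1) := by
        simp only [sum_Icc_one_eq_sum_range, add_tsub_cancel_right]
    _ = ∑ i ∈ range (m + 1), (m.choose i : ℚ) * (-1) ^ i / (i + 1) / (i + 1) := by
        rw [sum_range_choose_succ_succ_mul_neg_one_pow, show harmonic2 0 = 0 from rfl, zero_add]
        refine sum_congr rfl fun i _ => ?_
        rw [harmonic2_succ, add_sub_cancel_left, div_div, ← sq]
        push_cast
        ring
    _ = (∑ i ∈ range (m + 1), ((m + 1).choose (i + 1) : ℚ) * (-1) ^ i / (i + 1)) / (m + 1) := by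
        rw [sum_div]
        refine sum_congr rfl fun i _ => ?_
        rw [mul_div_right_comm _ _ ((i : ℚ) + 1), Nat.cast_choose_div_succ]
        ring
    _ = harmonic1 (m + 1) / ↑(m + 1) := by
        rw [harmonic1_eq_harmonic, harmonic_eq_sum_choose, Nat.cast_add_one]
end
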